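/- Let A be a linear relation in a Hilbert space H. Then A is singular (ran A ⊆ mul A**) if and only if A** = closure(dom A) × mul A**, and also if and only if dom A* = ker A*. -/

import Mathlib

/-!
Since `ker A* = (ran A)ᗮ` and `mul A** = (dom A*)ᗮ`, both `ran A ⊆ mul A**` and
`dom A* ⊆ ker A*` say that `ran A ⊥ dom A*`. In general `dom A** ⊆ (mul A*)ᗮ = closure (dom A)`.
When `dom A* = ker A*`, every `(h, k) ∈ A*` also has `(h, 0) ∈ A*`, hence `k ∈ mul A*`; pairing
an arbitrary element of `closure (dom A) × mul A**` with `(h, k)` then gives `0 = 0`, so the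
product lies in `A**`, and the reverse inclusion follows from the same orthogonality relations.
-/

open scoped ComplexInnerProductSpace

variable {H : Type*} [NormedAddCommGroup H] [InnerProductSpace ℂ H] [CompleteSpace H]

/-- The adjoint of a linear relation (given as a set of pairs). -/
def adjRel (S : Set (H × H)) : Set (H × H) :=
  {p | ∀ q ∈ S, ⟪p.2, q.1⟫ = ⟪p.1, q.2⟫}

/-- The domain of a linear relation. -/
def domRel (S : Set (H × H)) : Set H := {f | ∃ g, (f, g) ∈ S}

/-- The range of a linear relation. -/
def ranRel (S : Set (H × H)) : Set H := {g | ∃ f, (f, g) ∈ S}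

/-- The multivalued part of a linear relation. -/
def mulRel (S : Set (H × H)) : Set H := {g | (0, g) ∈ S}

/-- The kernel of a linear relation. -/
def kerRel (S : Set (H × H)) : Set H := {f | (f, 0) ∈ S}

/-- The operatorwise sum of two linear relations. -/
def opSum (S T : Set (H × H)) : Set (H × H) :=
  {p | ∃ g h, (p.1, g) ∈ S ∧ (p.1, h) ∈ T ∧ p.2 = g + h}

/-- The product (composition) S ∘ T of two linear relations: apply T first, then S. -/
def relComp (S T : Set (H × H)) : Set (H × H) :=
  {p | ∃ h, (p.1, h) ∈ T ∧ (h, p.2) ∈ S}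

/-- The numerical range of a linear relation. -/
def numRange (S : Set (H × H)) : Set ℂ :=
  {z | ∃ p ∈ S, ‖p.1‖ = 1 ∧ z = ⟪p.2, p.1⟫}

section

variable {E : Type*} [NormedAddCommGroup E] [InnerProductSpace ℂ E]

theorem subset_adjRel_adjRel (S : Set (E × E)) : S ⊆ adjRel (adjRel S) := fun p hp r hr => by
  rw [← inner_conj_symm, ← hr p hp, inner_conj_symm]

theorem mem_mulRel_adjRel_iff {S : Set (E × E)} {g : E} :
    g ∈ mulRel (adjRel S) ↔ ∀ f ∈ domRel S, ⟪f, g⟫ = 0 := by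
  simp [mulRel, adjRel, domRel, inner_eq_zero_symm]

theorem mem_kerRel_adjRel_iff {S : Set (E × E)} {f : E} :
    f ∈ kerRel (adjRel S) ↔ ∀ g ∈ ranRel S, ⟪g, f⟫ = 0 := by
  simp only [kerRel, adjRel, ranRel, eq_comm, Prod.forall, Set.mem_ofPred_eq, inner_zero_left,
    inner_eq_zero_symm, forall_exists_index]
  exact forall_comm

theorem snd_mem_mulRel_adjRel {S : Set (E × E)} {r : E × E} (hr : r ∈ adjRel S)
    (hker : r.1 ∈ kerRel (adjRel S)) : r.2 ∈ mulRel (adjRel S) := by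
  rw [mem_mulRel_adjRel_iff]
  rintro p ⟨q, hpq⟩
  rw [inner_eq_zero_symm, hr (p, q) hpq, inner_eq_zero_symm]
  exact mem_kerRel_adjRel_iff.1 hker q ⟨p, hpq⟩

theorem ranRel_subset_mulRel_adjRel_adjRel_iff (S : Set (E × E)) :
    ranRel S ⊆ mulRel (adjRel (adjRel S)) ↔ domRel (adjRel S) = kerRel (adjRel S) := by
  have hker : kerRel (adjRel S) ⊆ domRel (adjRel S) := fun _ hf => ⟨0, hf⟩
  rw [Set.Subset.antisymm_iff, and_iff_left hker, Set.subset_def, Set.subset_def]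
  simp only [mem_mulRel_adjRel_iff, mem_kerRel_adjRel_iff]
  exact ⟨fun h f hf g hg => inner_eq_zero_symm.1 (h g hg f hf),
    fun h g hg f hf => inner_eq_zero_symm.1 (h f hf g hg)⟩

theorem domRel_eq_map_fst (A : Submodule ℂ (E × E)) :
    domRel (A : Set (E × E)) = A.map (LinearMap.fst ℂ E E) := by
  ext f
  simp [domRel]

end

theorem closure_domRel_eq (A : Submodule ℂ (H × H)) :
    closure (domRel (A : Set (H × H))) =
      {f | ∀ v ∈ mulRel (adjRel (A : Set (H × H))), ⟪v, f⟫ = 0} := by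
  rw [domRel_eq_map_fst, ← Submodule.topologicalClosure_coe,
    ← Submodule.orthogonal_orthogonal_eq_closure]
  ext f
  simp [Submodule.mem_orthogonal, mem_mulRel_adjRel_iff, domRel_eq_map_fst]

theorem domRel_adjRel_adjRel_subset_closure (A : Submodule ℂ (H × H)) :
    domRel (adjRel (adjRel (A : Set (H × H)))) ⊆ closure (domRel (A : Set (H × H))) := by
  rintro f ⟨g, hfg⟩
  rw [closure_domRel_eq]
  intro v hv
  rw [inner_eq_zero_symm, ← hfg (0, v) hv, inner_zero_right]

theorem adjRel_adjRel_eq_prod_of_domRel_eq_kerRel (A : Submodule ℂ (H × H))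
    (h : domRel (adjRel (A : Set (H × H))) = kerRel (adjRel (A : Set (H × H)))) :
    adjRel (adjRel (A : Set (H × H))) =
      closure (domRel (A : Set (H × H))) ×ˢ mulRel (adjRel (adjRel (A : Set (H × H)))) := by
  ext ⟨f, g⟩
  constructor
  · intro hfg
    refine ⟨domRel_adjRel_adjRel_subset_closure A ⟨g, hfg⟩, mem_mulRel_adjRel_iff.2 ?_⟩
    intro u hu
    have hker : u ∈ kerRel (adjRel (A : Set (H × H))) := h ▸ hu
    rw [inner_eq_zero_symm, hfg (u, 0) hker, inner_zero_right]
  · rintro ⟨hf, hg⟩ r hr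
    have hker : r.1 ∈ kerRel (adjRel (A : Set (H × H))) := h ▸ ⟨r.2, hr⟩
    rw [closure_domRel_eq] at hf
    rw [inner_eq_zero_symm.1 (mem_mulRel_adjRel_iff.1 hg r.1 ⟨r.2, hr⟩),
      inner_eq_zero_symm.1 (hf r.2 (snd_mem_mulRel_adjRel hr hker))]

/-- A is singular iff A** = closure (dom A) × mul A**, iff dom A* = ker A*. -/
theorem stmt19 (A : Submodule ℂ (H × H)) :
    (ranRel (A : Set (H × H)) ⊆ mulRel (adjRel (adjRel (A : Set (H × H)))) ↔
      adjRel (adjRel (A : Set (H × H))) =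
        (closure (domRel (A : Set (H × H)))) ×ˢ
          (mulRel (adjRel (adjRel (A : Set (H × H)))))) ∧
    (ranRel (A : Set (H × H)) ⊆ mulRel (adjRel (adjRel (A : Set (H × H)))) ↔
      domRel (adjRel (A : Set (H × H))) = kerRel (adjRel (A : Set (H × H)))) := by
  have singular_iff := ranRel_subset_mulRel_adjRel_adjRel_iff (A : Set (H × H))
  refine ⟨⟨fun h => adjRel_adjRel_eq_prod_of_domRel_eq_kerRel A (singular_iff.1 h), ?_⟩,
    singular_iff⟩
  rintro h g ⟨f, hfg⟩
  have hmem := subset_adjRel_adjRel _ hfg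
  rw [h] at hmem
  exact hmem.2
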